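/- arXiv:1611.01540 — 4 statements merged into one kernel-verified Lean document; each statement's English description precedes it below -/
import Mathlib

section
/- If every sublevel set Ω_F(λ) = {θ ∈ ℝ^S : F(θ) ≤ λ} of a continuous function F : ℝ^S → ℝ is path-connected, then every strict local minimum of F is a global minimum. (θ is a strict local minimum if there is ε > 0 with F(θ') > F(θ) for all θ' ∈ B(θ,ε) \ {θ}.) -/
/-!
A path inside the sublevel set `{F ≤ F θ}` from a point `θ'` with `F θ' < F θ` to `θ` cannot
stay away from a punctured neighbourhood of `θ`: otherwise the set of times at which it sits at
`θ` would be a proper nonempty clopen subset of `[0, 1]`. On that punctured neighbourhood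
`F > F θ`, contradicting that the path lies in the sublevel set.
-/

open Filter Topology Set

theorem Path.frequently_mem_range_nhdsNE {X : Type*} [TopologicalSpace X] [T1Space X] {x y : X}
    (γ : Path y x) (hxy : y ≠ x) : ∃ᶠ z in 𝓝[≠] x, z ∈ range γ := by
  intro hfar
  have hnear : ∀ᶠ z in 𝓝 x, z ∈ range γ → z = x := by
    filter_upwards [eventually_nhdsWithin_iff.mp hfar] with z hz hzγ
    by_contra hzx
    exact hz hzx hzγ
  have hclopen : IsClopen (γ ⁻¹' {x}) := by
    refine ⟨isClosed_singleton.preimage γ.continuous, isOpen_iff_eventually.mpr ?_⟩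
    intro t (ht : γ t = x)
    have hγt : Tendsto γ (𝓝 t) (𝓝 x) := by
      simpa only [ht] using γ.continuous.tendsto t
    filter_upwards [hγt.eventually hnear] with s hs
    exact hs ⟨s, rfl⟩
  have hone : (1 : unitInterval) ∈ γ ⁻¹' {x} := γ.target
  have hzero : (0 : unitInterval) ∉ γ ⁻¹' {x} := by simpa using hxy
  exact hzero ((hclopen.eq_univ ⟨1, hone⟩).symm ▸ mem_univ _)

theorem eq_of_joinedIn_sublevel_of_strictLocalMin {X : Type*} [TopologicalSpace X] [T1Space X]
    {f : X → ℝ} {x y : X} (hmin : ∀ᶠ z in 𝓝[≠] x, f x < f z)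
    (hjoin : JoinedIn {z | f z ≤ f x} y x) : y = x := by
  by_contra hxy
  obtain ⟨γ, hγ⟩ := hjoin
  obtain ⟨z, hfz, t, rfl⟩ := (hmin.and_frequently (γ.frequently_mem_range_nhdsNE hxy)).exists
  exact (hγ t).not_gt hfz

theorem stmt0_general {S : ℕ} (F : EuclideanSpace ℝ (Fin S) → ℝ)
    (hconn : ∀ lam : ℝ, ∀ θ1 θ2 : EuclideanSpace ℝ (Fin S),
      F θ1 ≤ lam → F θ2 ≤ lam → JoinedIn {θ | F θ ≤ lam} θ1 θ2)
    (θ : EuclideanSpace ℝ (Fin S))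
    (hmin : ∃ ε > 0, ∀ θ' : EuclideanSpace ℝ (Fin S), θ' ≠ θ → ‖θ' - θ‖ < ε → F θ < F θ') :
    ∀ θ' : EuclideanSpace ℝ (Fin S), F θ ≤ F θ' := by
  obtain ⟨ε, hε, hstrict⟩ := hmin
  have hlocal : ∀ᶠ z in 𝓝[≠] θ, F θ < F z := by
    refine eventually_nhdsWithin_iff.mpr (Metric.eventually_nhds_iff.mpr ⟨ε, hε, ?_⟩)
    intro z hz hzθ
    exact hstrict z hzθ (by rwa [← dist_eq_norm])
  intro θ'
  by_contra! hlt
  have hθ' := eq_of_joinedIn_sublevel_of_strictLocalMin hlocal (hconn (F θ) θ' θ hlt.le le_rfl)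
  exact hlt.ne (congrArg F hθ')

/-- If every sublevel set of a continuous `F : ℝ^S → ℝ` is (path-)connected, then every
strict local minimum of `F` is a global minimum. -/
theorem stmt0 {S : ℕ} (F : EuclideanSpace ℝ (Fin S) → ℝ) (hF : Continuous F)
    (hconn : ∀ lam : ℝ, ∀ θ1 θ2 : EuclideanSpace ℝ (Fin S),
      F θ1 ≤ lam → F θ2 ≤ lam → JoinedIn {θ | F θ ≤ lam} θ1 θ2)
    (θ : EuclideanSpace ℝ (Fin S))
    (hmin : ∃ ε > 0, ∀ θ' : EuclideanSpace ℝ (Fin S), θ' ≠ θ → ‖θ' - θ‖ < ε → F θ < F θ') :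
    ∀ θ' : EuclideanSpace ℝ (Fin S), F θ ≤ F θ' :=
  stmt0_general F hconn θ hmin
end

section
/- Let w₁, w₂ be unit vectors in ℝ^n with angle α = arccos⟨w₁,w₂⟩ < π, let w_m = (w₁+w₂)/‖w₁+w₂‖ be their unit bisector, let X be a random vector in ℝ^n with covariance Σ_X = 𝔼[XXᵀ] of finite operator norm, and define [w₁,w₂]_Z = 𝔼[max(0,⟨X,w₁⟩)·max(0,⟨X,w₂⟩)] and ‖w‖_Z² = 𝔼[max(0,⟨X,w⟩)²]. Then ((1+cos α)/2)·‖w_m‖_Z² − 2‖Σ_X‖·((1−cos α)/2 + sin²α) ≤ [w₁,w₂]_Z ≤ ((1+cos α)/2)·‖w_m‖_Z². -/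
/-!
Write `a = ⟨w₁, x⟩`, `b = ⟨w₂, x⟩`. Since `‖w₁ + w₂‖² = 2 + 2 cos α`, the right-hand side is the
expectation of `max(0, a + b)² / 4`, and pointwise
`0 ≤ max(0, a + b)² / 4 - max(0, a) max(0, b) ≤ (a - b)² / 4`.
Taking expectations, the gap is at most `𝔼⟨w₁ - w₂, X⟩² / 4 ≤ ‖Σ_X‖ ‖w₁ - w₂‖² / 4
= ‖Σ_X‖ (1 - cos α) / 2`.
-/

open MeasureTheory

open scoped RealInnerProductSpace

lemma max_zero_mul_max_zero_le (a b : ℝ) : max 0 a * max 0 b ≤ max 0 (a + b) ^ 2 / 4 := by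
  rcases le_total a 0 with ha | ha <;> rcases le_total b 0 with hb | hb
  · rw [max_eq_left ha, max_eq_left hb, zero_mul]; positivity
  · rw [max_eq_left ha, zero_mul]; positivity
  · rw [max_eq_left hb, mul_zero]; positivity
  · rw [max_eq_right ha, max_eq_right hb, max_eq_right (by linarith)]
    nlinarith [sq_nonneg (a - b)]

lemma sq_max_zero_add_div_four_sub_le (a b : ℝ) :
    max 0 (a + b) ^ 2 / 4 - max 0 a * max 0 b ≤ (a - b) ^ 2 / 4 := by
  rcases le_total (a + b) 0 with hs | hs
  · rw [max_eq_left hs]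
    nlinarith [mul_nonneg (le_max_left 0 a) (le_max_left 0 b), sq_nonneg (a - b)]
  · rw [max_eq_right hs]
    rcases le_total a 0 with ha | ha
    · rw [max_eq_left ha, zero_mul]; nlinarith
    rcases le_total b 0 with hb | hb
    · rw [max_eq_left hb, mul_zero]; nlinarith
    · rw [max_eq_right ha, max_eq_right hb]; nlinarith [sq_nonneg (a - b)]

section InnerProductSpace

variable {E : Type*} [NormedAddCommGroup E] [InnerProductSpace ℝ E]

lemma sq_norm_mul_sq_max_zero_inner_smul_inv_norm (v x : E) :
    ‖v‖ ^ 2 * max 0 ⟪‖v‖⁻¹ • v, x⟫ ^ 2 = max 0 ⟪v, x⟫ ^ 2 := by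
  rcases eq_or_ne v 0 with rfl | hv
  · simp
  have hv' : ‖v‖ ≠ 0 := norm_ne_zero_iff.mpr hv
  have hpull : max 0 (‖v‖⁻¹ * ⟪v, x⟫) = ‖v‖⁻¹ * max 0 ⟪v, x⟫ := by
    rw [mul_max_of_nonneg _ _ (inv_nonneg.mpr (norm_nonneg v)), mul_zero]
  rw [real_inner_smul_left, hpull, mul_pow, ← mul_assoc, ← mul_pow, mul_inv_cancel₀ hv', one_pow,
    one_mul]

variable {Ω : Type*} [MeasurableSpace Ω] {μ : Measure Ω} {X : Ω → E}

lemma MeasureTheory.MemLp.max_zero_inner {p : ENNReal} (hX : MemLp X p μ) (u : E) :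
    MemLp (fun ω => max 0 ⟪u, X ω⟫) p μ := by
  simpa only [max_comm] using (hX.const_inner u).pos_part

lemma integral_max_zero_mul_max_zero_le (hX : MemLp X 2 μ) (u v : E) :
    ∫ ω, max 0 ⟪u, X ω⟫ * max 0 ⟪v, X ω⟫ ∂μ ≤ ∫ ω, max 0 ⟪u + v, X ω⟫ ^ 2 / 4 ∂μ := by
  refine integral_mono ((hX.max_zero_inner u).integrable_mul (hX.max_zero_inner v))
    ((hX.max_zero_inner (u + v)).integrable_sq.div_const 4) fun ω => ?_
  simpa only [inner_add_left] using max_zero_mul_max_zero_le ⟪u, X ω⟫ ⟪v, X ω⟫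

lemma integral_sq_max_zero_sub_integral_max_zero_mul_le (hX : MemLp X 2 μ) (u v : E) :
    ∫ ω, max 0 ⟪u + v, X ω⟫ ^ 2 / 4 ∂μ - ∫ ω, max 0 ⟪u, X ω⟫ * max 0 ⟪v, X ω⟫ ∂μ
      ≤ (∫ ω, ⟪u - v, X ω⟫ ^ 2 ∂μ) / 4 := by
  have hprod : Integrable (fun ω => max 0 ⟪u, X ω⟫ * max 0 ⟪v, X ω⟫) μ :=
    (hX.max_zero_inner u).integrable_mul (hX.max_zero_inner v)
  rw [← integral_sub ((hX.max_zero_inner (u + v)).integrable_sq.div_const 4) hprod,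
    ← integral_div]
  refine integral_mono (((hX.max_zero_inner (u + v)).integrable_sq.div_const 4).sub hprod)
    ((hX.const_inner (u - v)).integrable_sq.div_const 4) fun ω => ?_
  simpa only [inner_add_left, inner_sub_left] using
    sq_max_zero_add_div_four_sub_le ⟪u, X ω⟫ ⟪v, X ω⟫

end InnerProductSpace

theorem stmt2_general {n : ℕ} {Ω : Type*} [MeasureSpace Ω]
    (X : Ω → EuclideanSpace ℝ (Fin n)) (hXm : Measurable X)
    (hX2 : Integrable (fun ω => ‖X ω‖ ^ 2))
    (C : ℝ)
    (hC : ∀ w : EuclideanSpace ℝ (Fin n), (∫ ω, (inner ℝ w (X ω) : ℝ) ^ 2) ≤ C * ‖w‖ ^ 2)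
    (w1 w2 : EuclideanSpace ℝ (Fin n)) (h1 : ‖w1‖ = 1) (h2 : ‖w2‖ = 1) :
    (1 + (inner ℝ w1 w2 : ℝ)) / 2 *
        (∫ ω, (max 0 (inner ℝ (‖w1 + w2‖⁻¹ • (w1 + w2)) (X ω) : ℝ)) ^ 2)
      - 2 * C * ((1 - (inner ℝ w1 w2 : ℝ)) / 2 + (1 - (inner ℝ w1 w2 : ℝ) ^ 2))
      ≤ (∫ ω, max 0 (inner ℝ w1 (X ω) : ℝ) * max 0 (inner ℝ w2 (X ω) : ℝ))
    ∧ (∫ ω, max 0 (inner ℝ w1 (X ω) : ℝ) * max 0 (inner ℝ w2 (X ω) : ℝ))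
      ≤ (1 + (inner ℝ w1 w2 : ℝ)) / 2 *
          (∫ ω, (max 0 (inner ℝ (‖w1 + w2‖⁻¹ • (w1 + w2)) (X ω) : ℝ)) ^ 2) := by
  set c : ℝ := ⟪w1, w2⟫
  have hX : MemLp X 2 := (memLp_two_iff_integrable_sq_norm hXm.aestronglyMeasurable).mpr hX2
  obtain ⟨hc_lo, hc_hi⟩ : -1 ≤ c ∧ c ≤ 1 :=
    abs_le.mp (by simpa [h1, h2] using abs_real_inner_le_norm w1 w2)
  have hC0 : 0 ≤ C := by
    simpa [h1] using (integral_nonneg fun ω => sq_nonneg ⟪w1, X ω⟫).trans (hC w1)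
  have hmid : (1 + c) / 2 * ∫ ω, max 0 ⟪‖w1 + w2‖⁻¹ • (w1 + w2), X ω⟫ ^ 2
      = ∫ ω, max 0 ⟪w1 + w2, X ω⟫ ^ 2 / 4 := by
    have hsum : (1 + c) / 2 = ‖w1 + w2‖ ^ 2 / 4 := by
      rw [norm_add_sq_real, h1, h2]; ring
    rw [hsum, ← integral_const_mul]
    congr 1 with ω
    rw [← sq_norm_mul_sq_max_zero_inner_smul_inv_norm (w1 + w2)]
    ring
  have hdiff := hC (w1 - w2)
  rw [norm_sub_sq_real, h1, h2] at hdiff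
  have hgap := integral_sq_max_zero_sub_integral_max_zero_mul_le hX w1 w2
  rw [hmid]
  refine ⟨?_, integral_max_zero_mul_max_zero_le hX w1 w2⟩
  nlinarith [mul_nonneg hC0 (sub_nonneg.mpr hc_hi), mul_nonneg hC0 (neg_le_iff_add_nonneg.mp hc_lo)]

/-- Proposition 2 (local linearization of the ReLU kernel): with `c = cos α = ⟨w₁,w₂⟩`,
`((1+c)/2)‖w_m‖_Z² − 2‖Σ_X‖((1−c)/2 + sin²α) ≤ [w₁,w₂]_Z ≤ ((1+c)/2)‖w_m‖_Z²`.
Here `C` plays the role of the operator norm of the covariance `Σ_X`. -/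
theorem stmt2 {n : ℕ} {Ω : Type*} [MeasureSpace Ω]
    [IsProbabilityMeasure (volume : Measure Ω)]
    (X : Ω → EuclideanSpace ℝ (Fin n)) (hXm : Measurable X)
    (hX2 : Integrable (fun ω => ‖X ω‖ ^ 2))
    (C : ℝ)
    (hC : ∀ w : EuclideanSpace ℝ (Fin n), (∫ ω, (inner ℝ w (X ω) : ℝ) ^ 2) ≤ C * ‖w‖ ^ 2)
    (w1 w2 : EuclideanSpace ℝ (Fin n)) (h1 : ‖w1‖ = 1) (h2 : ‖w2‖ = 1)
    (hangle : (-1 : ℝ) < (inner ℝ w1 w2 : ℝ)) :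
    (1 + (inner ℝ w1 w2 : ℝ)) / 2 *
        (∫ ω, (max 0 (inner ℝ (‖w1 + w2‖⁻¹ • (w1 + w2)) (X ω) : ℝ)) ^ 2)
      - 2 * C * ((1 - (inner ℝ w1 w2 : ℝ)) / 2 + (1 - (inner ℝ w1 w2 : ℝ) ^ 2))
      ≤ (∫ ω, max 0 (inner ℝ w1 (X ω) : ℝ) * max 0 (inner ℝ w2 (X ω) : ℝ))
    ∧ (∫ ω, max 0 (inner ℝ w1 (X ω) : ℝ) * max 0 (inner ℝ w2 (X ω) : ℝ))
      ≤ (1 + (inner ℝ w1 w2 : ℝ)) / 2 *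
          (∫ ω, (max 0 (inner ℝ (‖w1 + w2‖⁻¹ • (w1 + w2)) (X ω) : ℝ)) ^ 2) :=
  stmt2_general X hXm hX2 C hC w1 w2 h1 h2
end

section
/- Let X be a random vector in ℝ^n with 𝔼‖X‖² < ∞, and let w₁, w₂ be unit vectors with angle α between them. Then the random variable n = max(0,⟨X,w₂⟩) − max(0,⟨X,w₁⟩) satisfies 𝔼[n²] ≤ 2‖Σ_X‖·(1 − cos α) + 2‖Σ_X‖·sin²α, i.e. the ReLU features of nearby directions are close in L². -/
open MeasureTheory

/-! Since `t ↦ max 0 t` is 1-Lipschitz, `(z(w₂) − z(w₁))² ≤ ⟨w₂ − w₁, X⟩²` pointwise, and the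
covariance bound gives `𝔼⟨w₂ − w₁, X⟩² ≤ C‖w₂ − w₁‖² = 2C(1 − cos α)`. The term `2C sin²α`
is nonnegative slack. -/

lemma sq_max_zero_sub_max_zero_le (a b : ℝ) : (max 0 a - max 0 b) ^ 2 ≤ (a - b) ^ 2 := by
  rw [← sq_abs, ← sq_abs (a - b), max_comm, max_comm 0 b]
  exact pow_le_pow_left₀ (abs_nonneg _) (abs_max_sub_max_le_abs a b 0) 2

lemma norm_sub_sq_eq_of_norm_eq_one {E : Type*} [NormedAddCommGroup E] [InnerProductSpace ℝ E]
    {x y : E} (hx : ‖x‖ = 1) (hy : ‖y‖ = 1) : ‖y - x‖ ^ 2 = 2 * (1 - inner ℝ x y) := by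
  rw [norm_sub_sq_real, hx, hy, real_inner_comm]
  ring

section Relu

variable {Ω E : Type*} [MeasurableSpace Ω] {μ : Measure Ω}
  [NormedAddCommGroup E] [InnerProductSpace ℝ E] {X : Ω → E}

lemma integrable_inner_sq (hX : AEStronglyMeasurable X μ)
    (hX2 : Integrable (fun ω => ‖X ω‖ ^ 2) μ) (v : E) :
    Integrable (fun ω => (inner ℝ v (X ω) : ℝ) ^ 2) μ := by
  refine (hX2.const_mul (‖v‖ ^ 2)).mono'
    (((innerSL ℝ v).continuous.comp_aestronglyMeasurable hX).pow 2) (.of_forall fun ω => ?_)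
  rw [Real.norm_eq_abs, abs_pow, ← mul_pow]
  exact pow_le_pow_left₀ (abs_nonneg _) (abs_real_inner_le_norm v (X ω)) 2

lemma integral_sq_max_zero_inner_sub_le (hX : AEStronglyMeasurable X μ)
    (hX2 : Integrable (fun ω => ‖X ω‖ ^ 2) μ) (w₁ w₂ : E) :
    ∫ ω, (max 0 (inner ℝ w₂ (X ω) : ℝ) - max 0 (inner ℝ w₁ (X ω) : ℝ)) ^ 2 ∂μ
      ≤ ∫ ω, (inner ℝ (w₂ - w₁) (X ω) : ℝ) ^ 2 ∂μ := by
  refine integral_mono_of_nonneg (.of_forall fun _ => sq_nonneg _)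
    (integrable_inner_sq hX hX2 _) (.of_forall fun ω => ?_)
  simpa only [inner_sub_left] using sq_max_zero_sub_max_zero_le _ _

end Relu

/-- ReLU features of nearby directions are close in `L²`:
`𝔼[(z(w₂) − z(w₁))²] ≤ 2‖Σ_X‖(1 − cos α) + 2‖Σ_X‖ sin²α`, with `cos α = ⟨w₁,w₂⟩` and
`C` the operator-norm bound of the covariance `Σ_X`. -/
theorem stmt4 {n : ℕ} {Ω : Type*} [MeasureSpace Ω]
    [IsProbabilityMeasure (volume : Measure Ω)]
    (X : Ω → EuclideanSpace ℝ (Fin n)) (hXm : Measurable X)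
    (hX2 : Integrable (fun ω => ‖X ω‖ ^ 2))
    (C : ℝ)
    (hC : ∀ w : EuclideanSpace ℝ (Fin n), (∫ ω, (inner ℝ w (X ω) : ℝ) ^ 2) ≤ C * ‖w‖ ^ 2)
    (w1 w2 : EuclideanSpace ℝ (Fin n)) (h1 : ‖w1‖ = 1) (h2 : ‖w2‖ = 1) :
    (∫ ω, (max 0 (inner ℝ w2 (X ω) : ℝ) - max 0 (inner ℝ w1 (X ω) : ℝ)) ^ 2)
      ≤ 2 * C * (1 - (inner ℝ w1 w2 : ℝ)) + 2 * C * (1 - (inner ℝ w1 w2 : ℝ) ^ 2) := by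
  have hC0 : 0 ≤ C := by
    simpa [h1] using (integral_nonneg fun ω => sq_nonneg (inner ℝ w1 (X ω) : ℝ)).trans (hC w1)
  obtain ⟨hcos_ge, hcos_le⟩ := real_inner_mem_Icc_of_norm_eq_one h1 h2
  calc (∫ ω, (max 0 (inner ℝ w2 (X ω) : ℝ) - max 0 (inner ℝ w1 (X ω) : ℝ)) ^ 2)
      ≤ ∫ ω, (inner ℝ (w2 - w1) (X ω) : ℝ) ^ 2 :=
        integral_sq_max_zero_inner_sub_le hXm.aestronglyMeasurable hX2 w1 w2
    _ ≤ C * ‖w2 - w1‖ ^ 2 := hC _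
    _ = 2 * C * (1 - (inner ℝ w1 w2 : ℝ)) := by
        rw [norm_sub_sq_eq_of_norm_eq_one h1 h2]; ring
    _ ≤ _ := le_add_of_nonneg_right (mul_nonneg (by positivity) (by nlinarith))
end

section
/- Pruning bound: fix first-layer weights w₁, …, w_m (unit vectors in ℝ^n) and suppose ‖w_k − w_{k−1}‖ ≤ ε. Let β' minimize E(β) = 𝔼|Y − Σ_j β_j max(0,⟨w_j,X⟩)|² + κ‖β‖₁ and define β_p by merging coefficient β'_k into β'_{k−1} (i.e., (β_p)_{k−1} = β'_{k−1} + β'_k, (β_p)_k = 0, other entries unchanged). Then ‖β_p‖₁ ≤ ‖β'‖₁ and E(β_p) − E(β') ≤ C·ε for a constant C depending only on 𝔼|Y|², ‖Σ_X‖, and κ. -/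
/-!
Merging unit `k` into unit `k'` turns the residual `r = Y - ∑ β'_j relu⟪w_j, X⟫` of the minimizer
into `r + d` with `d = β'_k (relu⟪w_k, X⟫ - relu⟪w_k', X⟫)`, while the `ℓ¹` norm can only drop, by
the triangle inequality `|β'_k' + β'_k| ≤ |β'_k'| + |β'_k|`. Minkowski's inequality in `L²` bounds
the increase of the squared loss by `2 ‖r‖₂ ‖d‖₂ + ‖d‖₂²`. Comparing `β'` with `β = 0` gives
`‖r‖₂² ≤ 𝔼Y²` and `κ ‖β'‖₁ ≤ 𝔼Y²`, and since ReLU is 1-Lipschitz the covariance bound gives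
`‖d‖₂ ≤ |β'_k| √B ‖w_k - w_k'‖`. For unit vectors `‖w_k - w_k'‖ ≤ 2`, so the quadratic term is
also linear in `ε`.
-/

open MeasureTheory

section L2

variable {α : Type*} {m : MeasurableSpace α} {μ : Measure α}

theorem abs_integral_mul_le_sqrt_mul_sqrt {f g : α → ℝ} (hf : MemLp f 2 μ) (hg : MemLp g 2 μ) :
    |∫ a, f a * g a ∂μ| ≤ √(∫ a, f a ^ 2 ∂μ) * √(∫ a, g a ^ 2 ∂μ) := by
  have holder := integral_mul_norm_le_Lp_mul_Lq (f := f) (g := g) Real.HolderConjugate.two_two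
    (by rwa [ENNReal.ofReal_ofNat]) (by rwa [ENNReal.ofReal_ofNat])
  calc |∫ a, f a * g a ∂μ| ≤ ∫ a, ‖f a‖ * ‖g a‖ ∂μ := by
        simpa only [norm_mul, Real.norm_eq_abs] using
          norm_integral_le_integral_norm (μ := μ) (fun a => f a * g a)
    _ ≤ _ := holder
    _ = √(∫ a, f a ^ 2 ∂μ) * √(∫ a, g a ^ 2 ∂μ) := by
        simp only [Real.sqrt_eq_rpow, Real.rpow_two, Real.norm_eq_abs, sq_abs, one_div]

theorem integral_add_sq_le {f g : α → ℝ} (hf : MemLp f 2 μ) (hg : MemLp g 2 μ) :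
    ∫ a, (f a + g a) ^ 2 ∂μ ≤ (√(∫ a, f a ^ 2 ∂μ) + √(∫ a, g a ^ 2 ∂μ)) ^ 2 := by
  have hfg : Integrable (fun a => 2 * (f a * g a)) μ := (hf.integrable_mul hg).const_mul 2
  have hsum : Integrable (fun a => f a ^ 2 + 2 * (f a * g a)) μ := hf.integrable_sq.add hfg
  have expand : ∫ a, (f a + g a) ^ 2 ∂μ
      = ∫ a, f a ^ 2 ∂μ + 2 * ∫ a, f a * g a ∂μ + ∫ a, g a ^ 2 ∂μ := by
    rw [← integral_const_mul, ← integral_add hf.integrable_sq hfg,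
      ← integral_add hsum hg.integrable_sq]
    congr 1 with a
    ring
  rw [expand, add_sq, Real.sq_sqrt (integral_nonneg fun a => sq_nonneg (f a)),
    Real.sq_sqrt (integral_nonneg fun a => sq_nonneg (g a))]
  nlinarith [le_abs_self (∫ a, f a * g a ∂μ), abs_integral_mul_le_sqrt_mul_sqrt hf hg]

end L2

section ReluNet

variable {α : Type*} {m : MeasurableSpace α} {μ : Measure α}
variable {E : Type*} [NormedAddCommGroup E] [InnerProductSpace ℝ E]

theorem MeasureTheory.MemLp.relu_inner {X : α → E} (hX : MemLp X 2 μ) (v : E) :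
    MemLp (fun a => max 0 (inner ℝ v (X a))) 2 μ :=
  (MemLp.zero (ε := ℝ)).sup (hX.const_inner v)

theorem sq_relu_sub_relu_le (s t : ℝ) : (max 0 s - max 0 t) ^ 2 ≤ (s - t) ^ 2 := by
  rw [sq_le_sq, max_comm 0 s, max_comm 0 t]
  exact abs_max_sub_max_le_abs s t 0

theorem integral_sq_relu_inner_sub_le {X : α → E} (hX : MemLp X 2 μ) {B : ℝ}
    (hB : ∀ v : E, ∫ a, inner ℝ v (X a) ^ 2 ∂μ ≤ B * ‖v‖ ^ 2) (v w : E) :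
    ∫ a, (max 0 (inner ℝ v (X a)) - max 0 (inner ℝ w (X a))) ^ 2 ∂μ ≤ B * ‖v - w‖ ^ 2 :=
  calc _ ≤ ∫ a, inner ℝ (v - w) (X a) ^ 2 ∂μ :=
        integral_mono_of_nonneg (ae_of_all μ fun a => sq_nonneg _)
          (hX.const_inner (v - w)).integrable_sq
          (ae_of_all μ fun a => by simpa only [inner_sub_left] using sq_relu_sub_relu_le _ _)
    _ ≤ B * ‖v - w‖ ^ 2 := hB (v - w)

theorem sqrt_integral_sq_mul_relu_inner_sub_le {X : α → E} (hX : MemLp X 2 μ) {B : ℝ}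
    (hB : ∀ v : E, ∫ a, inner ℝ v (X a) ^ 2 ∂μ ≤ B * ‖v‖ ^ 2) (c : ℝ) (v w : E) :
    √(∫ a, (c * (max 0 (inner ℝ v (X a)) - max 0 (inner ℝ w (X a)))) ^ 2 ∂μ)
      ≤ |c| * √B * ‖v - w‖ :=
  calc _ ≤ √(B * (|c| * ‖v - w‖) ^ 2) := by
        refine Real.sqrt_le_sqrt ?_
        simp only [mul_pow, integral_const_mul, sq_abs]
        rw [mul_left_comm]
        exact mul_le_mul_of_nonneg_left (integral_sq_relu_inner_sub_le hX hB v w) (sq_nonneg c)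
    _ = |c| * √B * ‖v - w‖ := by
        rw [Real.sqrt_mul' _ (sq_nonneg _), Real.sqrt_sq (by positivity)]
        ring

variable {ι : Type*} [Fintype ι]

def reluNet (w : ι → E) (β : ι → ℝ) (x : E) : ℝ := ∑ j, β j * max 0 (inner ℝ (w j) x)

noncomputable def lassoRisk (μ : Measure α) (X : α → E) (Y : α → ℝ) (κ : ℝ) (w : ι → E)
    (β : ι → ℝ) : ℝ :=
  ∫ a, (Y a - reluNet w β (X a)) ^ 2 ∂μ + κ * ∑ j, |β j|

theorem MeasureTheory.MemLp.reluNet {X : α → E} (hX : MemLp X 2 μ) (w : ι → E) (β : ι → ℝ) :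
    MemLp (fun a => reluNet w β (X a)) 2 μ :=
  memLp_finsetSum _ fun j _ => (hX.relu_inner (w j)).const_mul (β j)

theorem lassoRisk_zero (μ : Measure α) (X : α → E) (Y : α → ℝ) (κ : ℝ) (w : ι → E) :
    lassoRisk μ X Y κ w 0 = ∫ a, Y a ^ 2 ∂μ := by
  simp [lassoRisk, reluNet]

section LassoRiskLe

variable {X : α → E} {Y : α → ℝ} {κ : ℝ} {w : ι → E} {β : ι → ℝ} {S : ℝ}

theorem integral_sq_le_of_lassoRisk_le (hκ : 0 ≤ κ) (h : lassoRisk μ X Y κ w β ≤ S) :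
    ∫ a, (Y a - reluNet w β (X a)) ^ 2 ∂μ ≤ S := by
  have hl1 : 0 ≤ ∑ j, |β j| := Finset.sum_nonneg fun j _ => abs_nonneg (β j)
  unfold lassoRisk at h
  nlinarith [mul_nonneg hκ hl1]

theorem sum_abs_le_of_lassoRisk_le (hκ : 0 < κ) (h : lassoRisk μ X Y κ w β ≤ S) :
    ∑ j, |β j| ≤ S / κ := by
  have hloss : 0 ≤ ∫ a, (Y a - reluNet w β (X a)) ^ 2 ∂μ :=
    integral_nonneg fun a => sq_nonneg _
  rw [le_div_iff₀ hκ]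
  unfold lassoRisk at h
  linarith

end LassoRiskLe

section Merge

variable [DecidableEq ι] {k k' : ι}

def mergeCoeff (β : ι → ℝ) (k k' : ι) : ι → ℝ :=
  Function.update (Function.update β k' (β k' + β k)) k 0

theorem sum_apply_mergeCoeff_sub (β : ι → ℝ) (hkk : k ≠ k') (G : ι → ℝ → ℝ) :
    ∑ j, (G j (mergeCoeff β k k' j) - G j (β j))
      = (G k 0 - G k (β k)) + (G k' (β k' + β k) - G k' (β k')) := by
  rw [Finset.sum_eq_add_of_mem k k' (Finset.mem_univ k) (Finset.mem_univ k') hkk]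
  · simp [mergeCoeff, hkk.symm]
  · intro j _ hj
    simp [mergeCoeff, hj.1, hj.2]

theorem sum_abs_mergeCoeff_le (β : ι → ℝ) (hkk : k ≠ k') :
    ∑ j, |mergeCoeff β k k' j| ≤ ∑ j, |β j| := by
  have h := sum_apply_mergeCoeff_sub β hkk fun _ b => |b|
  rw [Finset.sum_sub_distrib, abs_zero] at h
  linarith [abs_add_le (β k') (β k)]

theorem reluNet_mergeCoeff (w : ι → E) (β : ι → ℝ) (hkk : k ≠ k') (x : E) :
    reluNet w (mergeCoeff β k k') x
      = reluNet w β x + β k * (max 0 (inner ℝ (w k') x) - max 0 (inner ℝ (w k) x)) := by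
  have h := sum_apply_mergeCoeff_sub β hkk fun j b => b * max 0 (inner ℝ (w j) x)
  rw [Finset.sum_sub_distrib] at h
  simp only [reluNet]
  linarith

theorem lassoRisk_mergeCoeff_sub_le {X : α → E} {Y : α → ℝ} (hX : MemLp X 2 μ)
    (hY : MemLp Y 2 μ) {B : ℝ} (hB : ∀ v : E, ∫ a, inner ℝ v (X a) ^ 2 ∂μ ≤ B * ‖v‖ ^ 2)
    {κ : ℝ} (hκ : 0 < κ) (w : ι → E) {β' : ι → ℝ}
    (hmin : ∀ β, lassoRisk μ X Y κ w β' ≤ lassoRisk μ X Y κ w β) (hkk : k ≠ k') :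
    lassoRisk μ X Y κ w (mergeCoeff β' k k') - lassoRisk μ X Y κ w β'
      ≤ 2 * √(∫ a, Y a ^ 2 ∂μ) * ((∫ a, Y a ^ 2 ∂μ) / κ * √B * ‖w k - w k'‖)
        + ((∫ a, Y a ^ 2 ∂μ) / κ * √B * ‖w k - w k'‖) ^ 2 := by
  set S := ∫ a, Y a ^ 2 ∂μ
  set r := fun a => Y a - reluNet w β' (X a)
  set d := fun a => β' k * (max 0 (inner ℝ (w k) (X a)) - max 0 (inner ℝ (w k') (X a)))
  have hriskS : lassoRisk μ X Y κ w β' ≤ S := (hmin 0).trans_eq (lassoRisk_zero μ X Y κ w)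
  have hr : √(∫ a, r a ^ 2 ∂μ) ≤ √S :=
    Real.sqrt_le_sqrt (integral_sq_le_of_lassoRisk_le hκ.le hriskS)
  have hd : √(∫ a, d a ^ 2 ∂μ) ≤ S / κ * √B * ‖w k - w k'‖ := by
    refine (sqrt_integral_sq_mul_relu_inner_sub_le hX hB _ _ _).trans ?_
    have hβk : |β' k| ≤ S / κ :=
      (Finset.single_le_sum (fun j _ => abs_nonneg (β' j)) (Finset.mem_univ k)).trans
        (sum_abs_le_of_lassoRisk_le hκ hriskS)
    gcongr
  have hrisk_merge : lassoRisk μ X Y κ w (mergeCoeff β' k k')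
      = ∫ a, (r a + d a) ^ 2 ∂μ + κ * ∑ j, |mergeCoeff β' k k' j| := by
    simp only [lassoRisk, reluNet_mergeCoeff w β' hkk, r, d]
    congr 2 with a
    ring
  have hrisk : lassoRisk μ X Y κ w β' = ∫ a, r a ^ 2 ∂μ + κ * ∑ j, |β' j| := rfl
  have hminkowski := integral_add_sq_le (f := r) (g := d) (hY.sub (hX.reluNet w β'))
    (((hX.relu_inner (w k)).sub (hX.relu_inner (w k'))).const_mul (β' k))
  have hl1 := mul_le_mul_of_nonneg_left (sum_abs_mergeCoeff_le β' hkk) hκ.le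
  have hsq_r : √(∫ a, r a ^ 2 ∂μ) ^ 2 = ∫ a, r a ^ 2 ∂μ :=
    Real.sq_sqrt (integral_nonneg fun a => sq_nonneg (r a))
  rw [hrisk_merge, hrisk]
  nlinarith [mul_le_mul hr hd (Real.sqrt_nonneg _) (Real.sqrt_nonneg S),
    mul_le_mul hd hd (Real.sqrt_nonneg _) ((Real.sqrt_nonneg _).trans hd),
    Real.sqrt_nonneg (∫ a, d a ^ 2 ∂μ)]

end Merge

end ReluNet

theorem stmt16_general {n : ℕ} {Ω : Type*} [MeasureSpace Ω]
    (X : Ω → EuclideanSpace ℝ (Fin n)) (Y : Ω → ℝ) (hXm : Measurable X) (hYm : Measurable Y)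
    (hX2 : Integrable (fun ω => ‖X ω‖ ^ 2)) (hY2 : Integrable (fun ω => (Y ω) ^ 2))
    (B : ℝ)
    (hB : ∀ v : EuclideanSpace ℝ (Fin n), (∫ ω, (inner ℝ v (X ω) : ℝ) ^ 2) ≤ B * ‖v‖ ^ 2)
    (κ : ℝ) (hκ : 0 < κ) :
    ∃ C : ℝ, ∀ (m : ℕ) (w : Fin m → EuclideanSpace ℝ (Fin n)), (∀ i, ‖w i‖ = 1) →
      ∀ k k' : Fin m, k ≠ k' → ∀ ε : ℝ, ‖w k - w k'‖ ≤ ε →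
      ∀ β' : Fin m → ℝ,
        (∀ β : Fin m → ℝ,
          (∫ ω, (Y ω - ∑ j, β' j * max 0 (inner ℝ (w j) (X ω) : ℝ)) ^ 2) + κ * ∑ j, |β' j|
            ≤ (∫ ω, (Y ω - ∑ j, β j * max 0 (inner ℝ (w j) (X ω) : ℝ)) ^ 2)
                + κ * ∑ j, |β j|) →
        (∑ j, |Function.update (Function.update β' k' (β' k' + β' k)) k 0 j|
            ≤ ∑ j, |β' j|) ∧
        ((∫ ω, (Y ω - ∑ j,
              Function.update (Function.update β' k' (β' k' + β' k)) k 0 j *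
                max 0 (inner ℝ (w j) (X ω) : ℝ)) ^ 2)
            + κ * ∑ j, |Function.update (Function.update β' k' (β' k' + β' k)) k 0 j|)
          - ((∫ ω, (Y ω - ∑ j, β' j * max 0 (inner ℝ (w j) (X ω) : ℝ)) ^ 2)
              + κ * ∑ j, |β' j|)
          ≤ C * ε := by
  have hX : MemLp X 2 := (memLp_two_iff_integrable_sq_norm hXm.aestronglyMeasurable).2 hX2
  have hY : MemLp Y 2 := (memLp_two_iff_integrable_sq hYm.aestronglyMeasurable).2 hY2
  set S := ∫ ω, Y ω ^ 2
  set M := S / κ * √B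
  have hM : 0 ≤ M := by
    have : 0 ≤ S := integral_nonneg fun ω => sq_nonneg (Y ω)
    positivity
  refine ⟨2 * √S * M + 2 * M ^ 2, fun m w hw k k' hkk ε hε β' hmin =>
    ⟨sum_abs_mergeCoeff_le β' hkk, ?_⟩⟩
  set Δ := ‖w k - w k'‖
  have hΔ_sq : Δ ^ 2 ≤ 2 * ε := by
    have hΔ2 : Δ ≤ 2 := (norm_sub_le _ _).trans (by rw [hw k, hw k']; norm_num)
    nlinarith [norm_nonneg (w k - w k')]
  calc _ ≤ 2 * √S * (M * Δ) + (M * Δ) ^ 2 := lassoRisk_mergeCoeff_sub_le hX hY hB hκ w hmin hkk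
    _ ≤ 2 * √S * (M * ε) + M ^ 2 * (2 * ε) := by
        rw [mul_pow]
        gcongr
    _ = (2 * √S * M + 2 * M ^ 2) * ε := by ring

/-- Pruning bound: merging the coefficient of a ReLU unit `w k` into that of a nearby unit
`w k'` (with `‖w k − w k'‖ ≤ ε`) does not increase the `ℓ¹` norm of the second layer and
increases the regularized risk of the minimizer `β'` by at most `C·ε`, where `C` depends only
on `𝔼|Y|²`, the covariance bound `B` (for `‖Σ_X‖`) and `κ`. -/
theorem stmt16 {n : ℕ} {Ω : Type*} [MeasureSpace Ω]
    [IsProbabilityMeasure (volume : Measure Ω)]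
    (X : Ω → EuclideanSpace ℝ (Fin n)) (Y : Ω → ℝ) (hXm : Measurable X) (hYm : Measurable Y)
    (hX2 : Integrable (fun ω => ‖X ω‖ ^ 2)) (hY2 : Integrable (fun ω => (Y ω) ^ 2))
    (B : ℝ)
    (hB : ∀ v : EuclideanSpace ℝ (Fin n), (∫ ω, (inner ℝ v (X ω) : ℝ) ^ 2) ≤ B * ‖v‖ ^ 2)
    (κ : ℝ) (hκ : 0 < κ) :
    ∃ C : ℝ, ∀ (m : ℕ) (w : Fin m → EuclideanSpace ℝ (Fin n)), (∀ i, ‖w i‖ = 1) →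
      ∀ k k' : Fin m, k ≠ k' → ∀ ε : ℝ, ‖w k - w k'‖ ≤ ε →
      ∀ β' : Fin m → ℝ,
        (∀ β : Fin m → ℝ,
          (∫ ω, (Y ω - ∑ j, β' j * max 0 (inner ℝ (w j) (X ω) : ℝ)) ^ 2) + κ * ∑ j, |β' j|
            ≤ (∫ ω, (Y ω - ∑ j, β j * max 0 (inner ℝ (w j) (X ω) : ℝ)) ^ 2)
                + κ * ∑ j, |β j|) →
        (∑ j, |Function.update (Function.update β' k' (β' k' + β' k)) k 0 j|
            ≤ ∑ j, |β' j|) ∧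
        ((∫ ω, (Y ω - ∑ j,
              Function.update (Function.update β' k' (β' k' + β' k)) k 0 j *
                max 0 (inner ℝ (w j) (X ω) : ℝ)) ^ 2)
            + κ * ∑ j, |Function.update (Function.update β' k' (β' k' + β' k)) k 0 j|)
          - ((∫ ω, (Y ω - ∑ j, β' j * max 0 (inner ℝ (w j) (X ω) : ℝ)) ^ 2)
              + κ * ∑ j, |β' j|)
          ≤ C * ε :=
  stmt16_general X Y hXm hYm hX2 hY2 B hB κ hκ
end
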